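/- arXiv:2103.12779 — 4 statements merged into one kernel-verified Lean document; each statement's English description precedes it below -/
import Mathlib

section
/- The system π = c + β((1-λ)r + λr* - rⁿ) + ε₁, r* = rⁿ + γπ + ε₂, r = max(r*, 0) has a unique solution (π, r*) for every (ε₁, ε₂) ∈ ℝ² if and only if (1-γβ)/(1-λγβ) > 0 (assuming 1-λγβ ≠ 0 and 1-γβ ≠ 0). -/
lemma maxfacts (a b : ℝ) :
    (max a 0 - max b 0) * ((a - b) - (max a 0 - max b 0)) ≥ 0 ∧
    (max a 0 - max b 0) * (a - b) ≥ 0 := by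
  rcases le_total a 0 with ha | ha <;> rcases le_total b 0 with hb | hb <;>
    simp only [max_eq_right ha, max_eq_left ha, max_eq_right hb, max_eq_left hb] <;>
    constructor <;> nlinarith

lemma uniq_aux (c β γ lam rn ε₁ ε₂ : ℝ)
    (hAB : 0 < (1 - γ * β) * (1 - lam * (γ * β)))
    (p q : ℝ × ℝ)
    (hp1 : p.1 = c + β * ((1 - lam) * max p.2 0 + lam * p.2 - rn) + ε₁)
    (hp2 : p.2 = rn + γ * p.1 + ε₂)
    (hq1 : q.1 = c + β * ((1 - lam) * max q.2 0 + lam * q.2 - rn) + ε₁)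
    (hq2 : q.2 = rn + γ * q.1 + ε₂) : p = q := by
  set A := 1 - γ * β with hAdef
  set B := 1 - lam * (γ * β) with hBdef
  have hA0 : A ≠ 0 := by intro h; rw [h] at hAB; simp at hAB
  have hB0 : B ≠ 0 := by intro h; rw [h] at hAB; simp at hAB
  set d := p.1 - q.1 with hd
  set s := p.2 - q.2 with hs
  set M := max p.2 0 - max q.2 0 with hM
  obtain ⟨hMsM, hMs⟩ := maxfacts p.2 q.2
  rw [← hs, ← hM] at hMsM hMs
  have hsd : s = γ * d := by rw [hs, hd]; linear_combination hp2 - hq2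
  have hBd : B * d = β * (1 - lam) * M := by
    rw [hd, hM, hBdef]
    linear_combination hp1 - hq1 + lam * β * (hp2 - hq2)
  have hBs : B * s = (B - A) * M := by
    rw [hsd]; linear_combination γ * hBd
  have hBsM : B * (s - M) = -(A * M) := by linear_combination hBs
  have heq : B ^ 2 * (s * (s - M)) = -((A * B) * (M * s)) := by
    linear_combination (B * s) * hBsM
  have hB2 : (0:ℝ) < B ^ 2 := by positivity
  have hX : s * (s - M) ≥ 0 := by nlinarith [sq_nonneg (s - M)]
  have hprod : 0 ≤ (A * B) * (M * s) := mul_nonneg hAB.le hMs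
  have hle : B ^ 2 * (s * (s - M)) ≤ B ^ 2 * 0 := by rw [mul_zero]; linarith [heq]
  have hXz : s * (s - M) = 0 := le_antisymm (le_of_mul_le_mul_left hle hB2) hX
  have hsM2 : (s - M) ^ 2 = 0 := by nlinarith
  have hsM : s = M := by
    have := pow_eq_zero_iff (n := 2) (by norm_num) |>.mp hsM2
    linarith [this]
  have hAs : A * s = 0 := by linear_combination hBs - (B - A) * hsM
  have hs0 : s = 0 := by
    rcases mul_eq_zero.mp hAs with h | h
    · exact absurd h hA0
    · exact h
  have hM0 : M = 0 := by rw [← hsM, hs0]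
  have hd0 : d = 0 := by
    have : B * d = 0 := by rw [hBd, hM0]; ring
    rcases mul_eq_zero.mp this with h | h
    · exact absurd h hB0
    · exact h
  have e1 : p.1 = q.1 := by rw [hd] at hd0; linarith
  have e2 : p.2 = q.2 := by rw [hs] at hs0; linarith
  exact Prod.ext e1 e2

/-- Coherency and completeness of the simultaneous equations model with a ZLB:
the system π = c + β((1-λ)r + λr* - rⁿ) + ε₁, r* = rⁿ + γπ + ε₂, r = max(r*,0)
has a unique solution (π, r*) for every (ε₁, ε₂) iff (1-γβ)/(1-λγβ) > 0. -/
theorem stmt0 (c β γ lam rn : ℝ) (h1 : 1 - γ * β ≠ 0) (h2 : 1 - lam * (γ * β) ≠ 0) :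
    (∀ ε₁ ε₂ : ℝ, ∃! p : ℝ × ℝ,
      p.1 = c + β * ((1 - lam) * max p.2 0 + lam * p.2 - rn) + ε₁ ∧
      p.2 = rn + γ * p.1 + ε₂) ↔
    (1 - γ * β) / (1 - lam * (γ * β)) > 0 := by
  have hiff : (0 < (1 - γ * β) / (1 - lam * (γ * β))) ↔
      (0 < (1 - γ * β) * (1 - lam * (γ * β))) := by
    rw [div_pos_iff, mul_pos_iff]
  constructor
  · intro h
    rw [gt_iff_lt, hiff]
    by_contra hc
    have hABlt : (1 - γ * β) * (1 - lam * (γ * β)) < 0 :=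
      lt_of_le_of_ne (not_lt.mp hc) (mul_ne_zero h1 h2)
    set A := 1 - γ * β with hAdef
    set B := 1 - lam * (γ * β) with hBdef
    set ε₂ := 1 - A * rn - γ * c with he2
    obtain ⟨p, hp, hu⟩ := h 0 ε₂
    set πp := (c + β * ε₂) / A with hπp
    set rp := rn + γ * πp + ε₂ with hrp
    set πm := (c + lam * β * (rn + ε₂) - β * rn) / B with hπm
    set rm := rn + γ * πm + ε₂ with hrm
    rcases lt_or_gt_of_ne h1 with hAneg | hApos
    · -- A < 0, B > 0 : no solution; derive contradiction from hp
      have hBpos : 0 < B := by nlinarith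
      rcases le_or_gt 0 p.2 with hge | hlt
      · have hmax : max p.2 0 = p.2 := max_eq_left hge
        rw [hmax] at hp
        have key : A * p.2 = 1 := by
          rw [hAdef]
          linear_combination hp.2 + γ * hp.1 + he2 - rn * hAdef
        nlinarith
      · have hmax : max p.2 0 = 0 := max_eq_right hlt.le
        rw [hmax] at hp
        have key : B * p.2 = 1 := by
          rw [hBdef]
          linear_combination hp.2 + γ * hp.1 + he2 - rn * hAdef
        nlinarith
    · -- A > 0, B < 0 : two solutions
      have hBneg : B < 0 := by nlinarith
      have hrp1 : rp = 1 / A := by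
        rw [hrp, hπp, he2]; field_simp; ring
      have hrm1 : rm = 1 / B := by
        rw [hrm, hπm, he2]; field_simp; ring
      have hrppos : 0 < rp := by rw [hrp1]; positivity
      have hrmneg : rm < 0 := by rw [hrm1]; exact div_neg_of_pos_of_neg one_pos hBneg
      have hp1 : (πp, rp).1 = c + β * ((1 - lam) * max (πp, rp).2 0 +
          lam * (πp, rp).2 - rn) + 0 := by
        simp only []
        rw [max_eq_left hrppos.le, hrp, hπp]
        field_simp
        ring
      have hp2 : (πp, rp).2 = rn + γ * (πp, rp).1 + ε₂ := rfl
      have hm1 : (πm, rm).1 = c + β * ((1 - lam) * max (πm, rm).2 0 +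
          lam * (πm, rm).2 - rn) + 0 := by
        simp only []
        rw [max_eq_right hrmneg.le, hrm, hπm]
        field_simp
        ring
      have hm2 : (πm, rm).2 = rn + γ * (πm, rm).1 + ε₂ := rfl
      have e1 := hu (πp, rp) ⟨hp1, hp2⟩
      have e2 := hu (πm, rm) ⟨hm1, hm2⟩
      have : rp = rm := by
        have := e1.trans e2.symm
        exact congrArg Prod.snd this
      rw [hrp1, hrm1] at this
      have h1A : 0 < 1 / A := by positivity
      have h1B : 1 / B < 0 := div_neg_of_pos_of_neg one_pos hBneg
      linarith
  · intro h
    have hAB : 0 < (1 - γ * β) * (1 - lam * (γ * β)) := hiff.mp h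
    intro ε₁ ε₂
    set A := 1 - γ * β with hAdef
    set B := 1 - lam * (γ * β) with hBdef
    set K := A * rn + γ * c + γ * ε₁ + ε₂ with hK
    set πp := (c + β * ε₂ + ε₁) / A with hπp
    set rp := rn + γ * πp + ε₂ with hrp
    set πm := (c + lam * β * (rn + ε₂) - β * rn + ε₁) / B with hπm
    set rm := rn + γ * πm + ε₂ with hrm
    have hrpK : rp = K / A := by rw [hrp, hπp, hK]; field_simp; ring
    have hrmK : rm = K / B := by rw [hrm, hπm, hK]; field_simp; ring
    rcases le_or_gt 0 (K / A) with hKA | hKA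
    · refine ⟨(πp, rp), ⟨?_, rfl⟩, ?_⟩
      · simp only []
        rw [show max rp 0 = rp from max_eq_left (hrpK ▸ hKA), hrp, hπp]
        field_simp
        ring
      · intro y hy
        exact uniq_aux c β γ lam rn ε₁ ε₂ hAB y (πp, rp) hy.1 hy.2
          (by simp only []
              rw [show max rp 0 = rp from max_eq_left (hrpK ▸ hKA), hrp, hπp]
              field_simp
              ring) rfl
    · have hKB : K / B < 0 := by
        have e : (K / A) * (A / B) = K / B := by
          rw [div_mul_div_comm, mul_comm K A, mul_div_mul_left _ _ h1]
        rw [← e]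
        exact mul_neg_of_neg_of_pos hKA h
      refine ⟨(πm, rm), ⟨?_, rfl⟩, ?_⟩
      · simp only []
        rw [show max rm 0 = 0 from max_eq_right (hrmK ▸ hKB.le), hrm, hπm]
        field_simp
        ring
      · intro y hy
        exact uniq_aux c β γ lam rn ε₁ ε₂ hAB y (πm, rm) hy.1 hy.2
          (by simp only []
              rw [show max rm 0 = 0 from max_eq_right (hrmK ▸ hKB.le), hrm, hπm]
              field_simp
              ring) rfl
end

section
/- In the kinked SEM π = c̃ + β̃(max(r*,0) - rⁿ) + ε̃₁, r* = rⁿ + γπ + ε₂ with β̃γ < 1, the unique solution is π = μ₁ + u₁ - β̃·D·(μ₂ + u₂) and r = max(μ₂+u₂, 0), where D = 1{r=0}, u₁ = (ε̃₁+β̃ε₂)/(1-γβ̃), u₂ = (γε̃₁+ε₂)/(1-γβ̃), μ₁ = c̃/(1-γβ̃), μ₂ = γc̃/(1-γβ̃) + rⁿ. -/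
/-!
Substituting the first equation into the second leaves a single piecewise-linear equation
r = (1 - γβ̃) s + γβ̃ max(r, 0) for the shadow rate, where s = μ₂ + u₂. Since γβ̃ < 1 its two
linear branches cannot both be consistent: the solution is r = s when s > 0 and r = (1 - γβ̃) s
when s ≤ 0. In both cases max(r, 0) = max(s, 0), and π is read off the first equation;
the indicator D enters only through D s = min(s, 0).
-/

theorem max_sub_mul_min_zero {k : ℝ} (hk : k ≤ 1) (s : ℝ) :
    max (s - k * min s 0) 0 = max s 0 := by
  rcases le_or_gt s 0 with hs | hs
  · rw [min_eq_left hs, max_eq_right hs, max_eq_right]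
    nlinarith
  · rw [min_eq_right hs.le, mul_zero, sub_zero]

theorem eq_mul_add_mul_max_zero_iff {k s r : ℝ} (hk : k < 1) :
    r = (1 - k) * s + k * max r 0 ↔ r = s - k * min s 0 := by
  constructor
  · intro hr
    rcases le_or_gt r 0 with hr0 | hr0
    · rw [max_eq_right hr0] at hr
      have hs : s ≤ 0 := by nlinarith
      rw [min_eq_left hs]
      linarith
    · rw [max_eq_left hr0.le] at hr
      have hs : 0 < s := by nlinarith
      have : (1 - k) * (r - s) = 0 := by linarith
      rw [min_eq_right hs.le]
      linarith [(mul_eq_zero.mp this).resolve_left (by linarith)]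
  · intro hr
    rw [hr, max_sub_mul_min_zero hk.le]
    rcases le_or_gt s 0 with hs | hs
    · rw [min_eq_left hs, max_eq_right hs]
      ring
    · rw [min_eq_right hs.le, max_eq_left hs.le]
      ring

theorem kinked_system_iff {β γ c a π r : ℝ} (h : β * γ < 1) :
    (π = c + β * max r 0 ∧ r = a + γ * π) ↔
      (π = c + β * max ((a + γ * c) / (1 - γ * β)) 0 ∧ r = a + γ * π) := by
  set s := (a + γ * c) / (1 - γ * β)
  have hk : γ * β < 1 := by linarith [mul_comm β γ]
  have hs : a + γ * c = (1 - γ * β) * s := by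
    rw [mul_div_cancel₀ _ (by linarith)]
  have hreduced : ∀ m, a + γ * (c + β * m) = (1 - γ * β) * s + γ * β * m := by
    intro m
    linear_combination hs
  constructor
  · rintro ⟨hπ, hr⟩
    have hr' : r = s - γ * β * min s 0 := by
      rw [← eq_mul_add_mul_max_zero_iff hk, ← hreduced, ← hπ, hr]
    rw [hr', max_sub_mul_min_zero hk.le] at hπ
    exact ⟨hπ, hr⟩
  · rintro ⟨hπ, hr⟩
    have hr' : r = s - γ * β * min s 0 := by
      rw [hr, hπ, hreduced]
      linear_combination γ * β * min_add_max s 0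
    refine ⟨?_, hr⟩
    rwa [hr', max_sub_mul_min_zero hk.le]

/-- Unique solution of the kinked SEM π = c̃ + β̃(max(r*,0) - rⁿ) + ε̃₁,
r* = rⁿ + γπ + ε₂ under the coherency condition β̃γ < 1. -/
theorem stmt1 (ctil βtil γ rn ε1til ε2 : ℝ) (h : βtil * γ < 1) :
    let u1 := (ε1til + βtil * ε2) / (1 - γ * βtil)
    let u2 := (γ * ε1til + ε2) / (1 - γ * βtil)
    let μ1 := ctil / (1 - γ * βtil)
    let μ2 := γ * ctil / (1 - γ * βtil) + rn
    let D : ℝ := if μ2 + u2 ≤ 0 then 1 else 0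
    let π0 := μ1 + u1 - βtil * D * (μ2 + u2)
    (∀ p : ℝ × ℝ,
      (p.1 = ctil + βtil * (max p.2 0 - rn) + ε1til ∧ p.2 = rn + γ * p.1 + ε2) ↔
      (p.1 = π0 ∧ p.2 = rn + γ * π0 + ε2)) ∧
    max (rn + γ * π0 + ε2) 0 = max (μ2 + u2) 0 := by
  intro u1 u2 μ1 μ2 D π0
  set c := ctil - βtil * rn + ε1til
  set s := μ2 + u2
  have hk : γ * βtil < 1 := by linarith [mul_comm βtil γ]
  have hk0 : 1 - γ * βtil ≠ 0 := (sub_pos.mpr hk).ne'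
  have hs : s = (rn + ε2 + γ * c) / (1 - γ * βtil) := by
    simp only [s, μ2, u2, c]
    field_simp
    ring
  have hDs : D * s = min s 0 := by
    simp only [D]
    split_ifs with h0
    · rw [one_mul, min_eq_left h0]
    · rw [zero_mul, min_eq_right (not_le.mp h0).le]
  have hπ0 : π0 = c + βtil * max s 0 := by
    have hμu : μ1 + u1 = c + βtil * s := by
      simp only [μ1, u1, s, μ2, u2, c]
      field_simp
      ring
    simp only [π0]
    linear_combination hμu - βtil * hDs - βtil * min_add_max s 0
  have hsystem : ∀ p : ℝ × ℝ,
      (p.1 = ctil + βtil * (max p.2 0 - rn) + ε1til ∧ p.2 = rn + γ * p.1 + ε2) ↔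
        (p.1 = c + βtil * max p.2 0 ∧ p.2 = rn + ε2 + γ * p.1) := by
    intro p
    constructor <;> rintro ⟨h1, h2⟩ <;> exact ⟨by linear_combination h1, by linear_combination h2⟩
  have hsolution : ∀ p : ℝ × ℝ,
      (p.1 = ctil + βtil * (max p.2 0 - rn) + ε1til ∧ p.2 = rn + γ * p.1 + ε2) ↔
        (p.1 = π0 ∧ p.2 = rn + γ * π0 + ε2) := by
    intro p
    rw [hsystem, kinked_system_iff h, ← hs, ← hπ0]
    constructor <;> rintro ⟨h1, h2⟩ <;> exact ⟨h1, by rw [h2, h1]; ring⟩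
  have hr0 : rn + γ * π0 + ε2 = s - γ * βtil * min s 0 := by
    have hsc : rn + ε2 + γ * c = (1 - γ * βtil) * s := by rw [hs, mul_div_cancel₀ _ hk0]
    rw [hπ0]
    linear_combination hsc + γ * βtil * min_add_max s 0
  exact ⟨hsolution, by rw [hr0, max_sub_mul_min_zero hk.le]⟩
end

section
/- Consider the piecewise system Y* = C x + u if D=0 and Y* = C̃ x + c̃ b + ũ if D=1 (D = 1{Y₂* ≤ b}), derived from A Y* = B x + ε with A = Ā when unconstrained and A = A* when constrained. Then C̃₁ = C₁ - β̃C₂ and C̃₂ = κC₂, where β̃ = (A11 - A12*A22*⁻¹A21)⁻¹(A12*A22*⁻¹A22 - A12) and κ = (Ā₂₂ - A21A11⁻¹Ā₁₂)/(A22* - A21A11⁻¹A12*). -/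
/-!
Put `M = [[1, -β̃], [0, κ']]` with `κ' = (A22 + A22* + A21 β̃) / A22*`. The equation
`(A11 - A22*⁻¹ A12* A21) β̃ = (A22 / A22*) A12* - A12` defining `β̃` is precisely the top-right
block of `A* M = Ā`, and `κ'` is chosen to make the bottom-right block hold. Hence
`A*⁻¹ = M Ā⁻¹`, which is the claim once `κ' = κ`. That follows by taking determinants:
`det M = κ'`, while `det A*` and `det Ā` are `det A11` times the respective Schur complements.
-/

namespace Matrix

section Semiring

variable {R l m n p q : Type*} [Semiring R] [Fintype n] [Fintype m]

theorem toRows₁_fromBlocks_mul (P : Matrix l n R) (Q : Matrix l m R) (S : Matrix p n R)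
    (T : Matrix p m R) (C : Matrix (n ⊕ m) q R) :
    (fromBlocks P Q S T * C).toRows₁ = P * C.toRows₁ + Q * C.toRows₂ := by
  rw [← fromRows_toRows C, fromBlocks_mul_fromRows, toRows₁_fromRows, fromRows_toRows]

theorem toRows₂_fromBlocks_mul (P : Matrix l n R) (Q : Matrix l m R) (S : Matrix p n R)
    (T : Matrix p m R) (C : Matrix (n ⊕ m) q R) :
    (fromBlocks P Q S T * C).toRows₂ = S * C.toRows₁ + T * C.toRows₂ := by
  rw [← fromRows_toRows C, fromBlocks_mul_fromRows, toRows₂_fromRows, fromRows_toRows]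

end Semiring

theorem mul_eq_smul_of_unit {R m : Type*} [CommSemiring R] (X : Matrix m Unit R)
    (Y : Matrix Unit Unit R) : X * Y = Y () () • X := by
  ext i j
  simp [mul_apply, mul_comm]

variable {K : Type*} [Field K] {n : Type*} [Fintype n] [DecidableEq n]

theorem det_fromBlocks_smul_one {A : Matrix n n K} (hA : IsUnit A.det) (B : Matrix n Unit K)
    (C : Matrix Unit n K) (d : K) :
    (fromBlocks A B C (d • 1)).det = A.det * (d - (C * A⁻¹ * B) () ()) := by
  let := invertibleOfIsUnitDet A hA
  rw [det_fromBlocks₁₁, invOf_eq_nonsing_inv, det_unique (d • 1 - C * A⁻¹ * B)]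
  simp

theorem det_fromBlocks_one_zero_smul_one (X : Matrix n Unit K) (c : K) :
    (fromBlocks 1 X 0 (c • (1 : Matrix Unit Unit K))).det = c := by
  simp [det_fromBlocks_zero₂₁]

theorem inv_eq_mul_inv_of_mul_eq {A M N : Matrix n n K} (h : A * M = N) (hN : IsUnit N.det) :
    A⁻¹ = M * N⁻¹ :=
  inv_eq_right_inv (by rw [← Matrix.mul_assoc, h, mul_nonsing_inv _ hN])

theorem fromBlocks_smul_one_mul_fromBlocks_one_neg (A11 : Matrix n n K)
    (A12 A12s : Matrix n Unit K) (A21 : Matrix Unit n K) {A22 A22s : K} (hA22s : A22s ≠ 0)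
    {β : Matrix n Unit K}
    (hβ : (A11 - A22s⁻¹ • (A12s * A21)) * β = (A22 / A22s) • A12s - A12) :
    fromBlocks A11 A12s A21 (A22s • 1) *
        fromBlocks 1 (-β) 0 ((A22s⁻¹ * (A22 + A22s + (A21 * β) () ())) • 1) =
      fromBlocks A11 (A12 + A12s) A21 ((A22 + A22s) • 1) := by
  set t := (A21 * β) () ()
  have hA11β : A11 * β = (A22s⁻¹ * t + A22 / A22s) • A12s - A12 := by
    rw [Matrix.sub_mul, Matrix.smul_mul, Matrix.mul_assoc, mul_eq_smul_of_unit A12s,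
      smul_smul] at hβ
    rw [add_smul, add_sub_assoc, ← hβ, add_sub_cancel]
  rw [fromBlocks_multiply]
  congr 1
  · simp
  · rw [Matrix.mul_neg, hA11β, Matrix.mul_smul, Matrix.mul_one]
    match_scalars
    · field_simp
      ring
    · ring
  · simp
  · ext ⟨⟩ ⟨⟩
    simp only [Matrix.mul_neg, Algebra.mul_smul_comm, mul_one, add_apply, neg_apply, smul_apply,
      one_apply_eq, smul_eq_mul, t]
    field_simp
    ring

end Matrix

open Matrix

theorem stmt16_general (m p : ℕ)
    (A11 : Matrix (Fin m) (Fin m) ℝ) (A12 A12s : Matrix (Fin m) Unit ℝ)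
    (A21 : Matrix Unit (Fin m) ℝ) (A22 A22s : ℝ)
    (B : Matrix (Fin m ⊕ Unit) (Fin p) ℝ)
    (hA11 : IsUnit A11.det) (hA22s : A22s ≠ 0)
    (hschurS : A22s - (A21 * A11⁻¹ * A12s) () () ≠ 0)
    (hAbar : IsUnit (Matrix.fromBlocks A11 (A12 + A12s) A21
      ((A22 + A22s) • (1 : Matrix Unit Unit ℝ))).det)
    (hsw : IsUnit (A11 - A22s⁻¹ • (A12s * A21)).det)
    (βt : Matrix (Fin m) Unit ℝ)
    (hβt : βt = (A11 - A22s⁻¹ • (A12s * A21))⁻¹ * ((A22 / A22s) • A12s - A12))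
    (κ : ℝ)
    (hκ : κ = ((A22 + A22s) - (A21 * A11⁻¹ * (A12 + A12s)) () ()) /
      (A22s - (A21 * A11⁻¹ * A12s) () ())) :
    ((Matrix.fromBlocks A11 A12s A21 (A22s • (1 : Matrix Unit Unit ℝ)))⁻¹ * B).toRows₁ =
      ((Matrix.fromBlocks A11 (A12 + A12s) A21
        ((A22 + A22s) • (1 : Matrix Unit Unit ℝ)))⁻¹ * B).toRows₁
      - βt * ((Matrix.fromBlocks A11 (A12 + A12s) A21
        ((A22 + A22s) • (1 : Matrix Unit Unit ℝ)))⁻¹ * B).toRows₂ ∧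
    ((Matrix.fromBlocks A11 A12s A21 (A22s • (1 : Matrix Unit Unit ℝ)))⁻¹ * B).toRows₂ =
      κ • ((Matrix.fromBlocks A11 (A12 + A12s) A21
        ((A22 + A22s) • (1 : Matrix Unit Unit ℝ)))⁻¹ * B).toRows₂ := by
  have hAM := fromBlocks_smul_one_mul_fromBlocks_one_neg A11 A12 A12s A21 hA22s
    (hβt ▸ mul_nonsing_inv_cancel_left _ _ hsw)
  set κ' := A22s⁻¹ * (A22 + A22s + (A21 * βt) () ())
  have hκ' : κ' = κ := by
    have hdet := congrArg det hAM
    rw [det_mul, det_fromBlocks_one_zero_smul_one, det_fromBlocks_smul_one hA11,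
      det_fromBlocks_smul_one hA11, Matrix.mul_add, Matrix.add_apply] at hdet
    rw [hκ, Matrix.mul_add, Matrix.add_apply, eq_div_iff hschurS]
    apply mul_left_cancel₀ hA11.ne_zero
    linear_combination hdet
  rw [hκ'] at hAM
  rw [inv_eq_mul_inv_of_mul_eq hAM hAbar, Matrix.mul_assoc, toRows₁_fromBlocks_mul,
    toRows₂_fromBlocks_mul]
  simp [sub_eq_add_neg]

/-- Relation between the constrained-regime and unconstrained-regime reduced-form
coefficients: C̃₁ = C₁ - β̃C₂ and C̃₂ = κC₂. -/
theorem stmt16 (m p : ℕ)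
    (A11 : Matrix (Fin m) (Fin m) ℝ) (A12 A12s : Matrix (Fin m) Unit ℝ)
    (A21 : Matrix Unit (Fin m) ℝ) (A22 A22s : ℝ)
    (B : Matrix (Fin m ⊕ Unit) (Fin p) ℝ)
    (hA11 : IsUnit A11.det) (hA22s : A22s ≠ 0)
    (hschurS : A22s - (A21 * A11⁻¹ * A12s) () () ≠ 0)
    (hschurB : (A22 + A22s) - (A21 * A11⁻¹ * (A12 + A12s)) () () ≠ 0)
    (hAbar : IsUnit (Matrix.fromBlocks A11 (A12 + A12s) A21
      ((A22 + A22s) • (1 : Matrix Unit Unit ℝ))).det)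
    (hAs : IsUnit (Matrix.fromBlocks A11 A12s A21
      (A22s • (1 : Matrix Unit Unit ℝ))).det)
    (hsw : IsUnit (A11 - A22s⁻¹ • (A12s * A21)).det)
    (βt : Matrix (Fin m) Unit ℝ)
    (hβt : βt = (A11 - A22s⁻¹ • (A12s * A21))⁻¹ * ((A22 / A22s) • A12s - A12))
    (κ : ℝ)
    (hκ : κ = ((A22 + A22s) - (A21 * A11⁻¹ * (A12 + A12s)) () ()) /
      (A22s - (A21 * A11⁻¹ * A12s) () ())) :
    ((Matrix.fromBlocks A11 A12s A21 (A22s • (1 : Matrix Unit Unit ℝ)))⁻¹ * B).toRows₁ =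
      ((Matrix.fromBlocks A11 (A12 + A12s) A21
        ((A22 + A22s) • (1 : Matrix Unit Unit ℝ)))⁻¹ * B).toRows₁
      - βt * ((Matrix.fromBlocks A11 (A12 + A12s) A21
        ((A22 + A22s) • (1 : Matrix Unit Unit ℝ)))⁻¹ * B).toRows₂ ∧
    ((Matrix.fromBlocks A11 A12s A21 (A22s • (1 : Matrix Unit Unit ℝ)))⁻¹ * B).toRows₂ =
      κ • ((Matrix.fromBlocks A11 (A12 + A12s) A21
        ((A22 + A22s) • (1 : Matrix Unit Unit ℝ)))⁻¹ * B).toRows₂ :=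
  stmt16_general m p A11 A12 A12s A21 A22 A22s B hA11 hA22s hschurS hAbar hsw βt hβt κ hκ
end

section
/- With notation as in the CKSVAR reduced form, c̃ = -A*⁻¹(A12; A22)b satisfies c̃₁ = β̃b and c̃₂ = (1-κ)b, where β̃ = (A11 - A12*A22*⁻¹A21)⁻¹(A12*A22*⁻¹A22 - A12) and κ = (Ā₂₂ - A21A11⁻¹Ā₁₂)/(A22* - A21A11⁻¹A12*). -/
/-!
Since `A*` is invertible, `c̃` is the unique solution of `A* c̃ = -(A12; A22) b`, and each half of
`c̃` is obtained by block elimination. Eliminating the scalar last row leaves the Schur complement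
`A11 - A12* A22*⁻¹ A21` acting on `c̃₁`, which produces `β̃ b`. Eliminating the first block row with
`A11⁻¹` leaves the scalar Schur complement `A22* - A21 A11⁻¹ A12*` times `c̃₂`, with right-hand side
`(A21 A11⁻¹ A12 - A22) b`; dividing by the complement gives exactly `(1 - κ) b`.
-/

namespace Matrix

variable {m n o R : Type*} [Fintype m] [Fintype n] [CommRing R]
  {A : Matrix m m R} {B : Matrix m n R} {C : Matrix n m R} {D : Matrix n n R}

theorem toRows₁_fromBlocks_mul_s17 (x : Matrix (m ⊕ n) o R) :
    (fromBlocks A B C D * x).toRows₁ = A * x.toRows₁ + B * x.toRows₂ := by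
  rw [← fromRows_toRows x, fromBlocks_mul_fromRows, toRows₁_fromRows, fromRows_toRows]

theorem toRows₂_fromBlocks_mul_s17 (x : Matrix (m ⊕ n) o R) :
    (fromBlocks A B C D * x).toRows₂ = C * x.toRows₁ + D * x.toRows₂ := by
  rw [← fromRows_toRows x, fromBlocks_mul_fromRows, toRows₂_fromRows, fromRows_toRows]

theorem schur₂₂_mul_toRows₁_of_fromBlocks_mul_eq [DecidableEq n] {x y : Matrix (m ⊕ n) o R}
    (hD : IsUnit D.det) (h : fromBlocks A B C D * x = y) :
    (A - B * D⁻¹ * C) * x.toRows₁ = y.toRows₁ - B * D⁻¹ * y.toRows₂ := by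
  rw [← h, toRows₁_fromBlocks_mul_s17, toRows₂_fromBlocks_mul_s17, Matrix.mul_add, Matrix.sub_mul,
    ← Matrix.mul_assoc _ D, nonsing_inv_mul_cancel_right D B hD, ← Matrix.mul_assoc _ C]
  abel

theorem schur₁₁_mul_toRows₂_of_fromBlocks_mul_eq [DecidableEq m] {x y : Matrix (m ⊕ n) o R}
    (hA : IsUnit A.det) (h : fromBlocks A B C D * x = y) :
    (D - C * A⁻¹ * B) * x.toRows₂ = y.toRows₂ - C * A⁻¹ * y.toRows₁ := by
  rw [← h, toRows₁_fromBlocks_mul_s17, toRows₂_fromBlocks_mul_s17, Matrix.mul_add, Matrix.sub_mul,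
    ← Matrix.mul_assoc _ A, nonsing_inv_mul_cancel_right A C hA, ← Matrix.mul_assoc _ B]
  abel

end Matrix

open Matrix

/-- The intercept c̃ = -A*⁻¹(A12; A22)b satisfies c̃₁ = β̃b and c̃₂ = (1-κ)b. -/
theorem stmt17 (m : ℕ)
    (A11 : Matrix (Fin m) (Fin m) ℝ) (A12 A12s : Matrix (Fin m) Unit ℝ)
    (A21 : Matrix Unit (Fin m) ℝ) (A22 A22s b : ℝ)
    (hA11 : IsUnit A11.det) (hA22s : A22s ≠ 0)
    (hschurS : A22s - (A21 * A11⁻¹ * A12s) () () ≠ 0)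
    (hAs : IsUnit (Matrix.fromBlocks A11 A12s A21
      (A22s • (1 : Matrix Unit Unit ℝ))).det)
    (hsw : IsUnit (A11 - A22s⁻¹ • (A12s * A21)).det)
    (βt : Matrix (Fin m) Unit ℝ)
    (hβt : βt = (A11 - A22s⁻¹ • (A12s * A21))⁻¹ * ((A22 / A22s) • A12s - A12))
    (κ : ℝ)
    (hκ : κ = ((A22 + A22s) - (A21 * A11⁻¹ * (A12 + A12s)) () ()) /
      (A22s - (A21 * A11⁻¹ * A12s) () ()))
    (ctil : Matrix (Fin m ⊕ Unit) Unit ℝ)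
    (hc : ctil = -(b • ((Matrix.fromBlocks A11 A12s A21
      (A22s • (1 : Matrix Unit Unit ℝ)))⁻¹ *
      Matrix.fromRows A12 (A22 • (1 : Matrix Unit Unit ℝ))))) :
    ctil.toRows₁ = b • βt ∧
    ctil.toRows₂ = ((1 - κ) * b) • (1 : Matrix Unit Unit ℝ) := by
  have hsol : fromBlocks A11 A12s A21 (A22s • 1) * ctil =
      fromRows (-(b • A12)) (-(b • A22) • 1) := by
    rw [hc, Matrix.mul_neg, Matrix.mul_smul, mul_nonsing_inv_cancel_left _ _ hAs]
    ext (i | i) j <;> simp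
  have hD : IsUnit (A22s • (1 : Matrix Unit Unit ℝ)).det := by simp [hA22s]
  have hDinv : (A22s • (1 : Matrix Unit Unit ℝ))⁻¹ = A22s⁻¹ • 1 :=
    inv_eq_left_inv (by simp [hA22s])
  constructor
  · have h₁ := schur₂₂_mul_toRows₁_of_fromBlocks_mul_eq hD hsol
    simp only [toRows₁_fromRows, toRows₂_fromRows, hDinv, Matrix.mul_smul, Matrix.smul_mul,
      Matrix.mul_one] at h₁
    have hβ : (A11 - A22s⁻¹ • (A12s * A21)) * ctil.toRows₁ =
        b • ((A22 / A22s) • A12s - A12) := by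
      rw [h₁]
      module
    rw [hβt, ← Matrix.mul_smul, ← hβ, nonsing_inv_mul_cancel_left _ _ hsw]
  · have h₂ := congrArg uniqueRingEquiv (schur₁₁_mul_toRows₂_of_fromBlocks_mul_eq hA11 hsol)
    simp only [toRows₁_fromRows, toRows₂_fromRows, map_sub, map_mul, uniqueRingEquiv_apply,
      Matrix.smul_apply, Matrix.neg_apply, Matrix.mul_smul, Matrix.mul_neg, smul_eq_mul,
      one_apply_eq, mul_one, PUnit.default_eq_unit] at h₂
    ext ⟨⟩ ⟨⟩
    rw [Matrix.smul_apply, one_apply_eq, smul_eq_mul, mul_one, hκ, Matrix.mul_add,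
      Matrix.add_apply]
    field_simp
    linear_combination h₂
end
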